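/- Let P, Q ∈ k[X] be nonconstant polynomials of degrees n, m over an algebraically closed field k of characteristic zero, and suppose f, g are nonconstant elements of a function field K over k with P(f) = Q(g). Then −Σ_{p : v_p(f) < 0} min{v_p(P'(f)), v_p(Q'(g))} = (n−1)·h(f), assuming n ≥ m. -/

import Mathlib

open scoped BigOperators

/-- Abstract data of the function field `K` of a smooth projective curve `C`
over an algebraically closed field `k`: the set of closed points, normalized
valuations `v p`, the genus, and the order `dv p f = v_p (d f / d t_p)` of the
local derivative with respect to a uniformizer at `p`. -/
structure CurveFunctionField (k : Type) [Field k] where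
  K : Type
  [fieldK : Field K]
  [algK : Algebra k K]
  Point : Type
  v : Point → K → ℤ
  genus : ℕ
  dv : Point → K → ℤ
  v_zero : ∀ p, v p 0 = 0
  v_mul : ∀ p (f g : K), f ≠ 0 → g ≠ 0 → v p (f * g) = v p f + v p g
  v_add : ∀ p (f g : K), f ≠ 0 → g ≠ 0 → f + g ≠ 0 →
    min (v p f) (v p g) ≤ v p (f + g)
  v_const : ∀ p (c : k), c ≠ 0 → v p (algebraMap k K c) = 0
  v_finite : ∀ f : K, f ≠ 0 → (Function.support fun p => v p f).Finite
  v_normalized : ∀ p : Point, ∃ f : K, f ≠ 0 ∧ v p f = 1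
  dv_pole : ∀ p (f : K), v p f < 0 → dv p f = v p f - 1
  dv_reg : ∀ p (f : K), 0 ≤ v p f → 0 ≤ dv p f

namespace CurveFunctionField

variable {k : Type} [Field k] (F : CurveFunctionField k)

instance : Field F.K := F.fieldK
instance : Algebra k F.K := F.algK

/-- `f ∈ K` is nonconstant if it is not in the image of `k`. -/
def Nonconstant (f : F.K) : Prop := f ∉ Set.range (algebraMap k F.K)

/-- The height `h(f) = Σ_p −min{0, v_p(f)}` of `f ∈ K`. -/
noncomputable def ht (f : F.K) : ℤ := ∑ᶠ p : F.Point, -(min 0 (F.v p f))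

/-- The height `h(f, g) = Σ_p −min{v_p(f), v_p(g)}` of `[f : g] ∈ ℙ¹(K)`. -/
noncomputable def ht2 (f g : F.K) : ℤ :=
  ∑ᶠ p : F.Point, -(min (F.v p f) (F.v p g))

end CurveFunctionField

/-!
At a pole `p` of `f` the leading term of `R(f)` dominates, so `v_p(R(f)) = deg R · v_p(f)`
for every nonzero `R`. Since `v_p(P(f)) < 0`, the relation `P(f) = Q(g)` forces `p` to be a
pole of `g` as well (polynomials in `g` are regular where `g` is), with `n·v_p(f) = m·v_p(g)`.
Then `v_p(P'(f)) = (n-1)·v_p(f)` and `v_p(Q'(g)) = (m-1)·v_p(g) = (m-1)n/m · v_p(f)`, and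
`m ≤ n` makes the former the minimum. Summing `(n-1)·v_p(f)` over the poles gives `-(n-1)·h(f)`.
-/

open Polynomial CurveFunctionField

lemma min_sub_one_mul_eq_left {a b n m : ℤ} (ha : a < 0) (hm : 1 ≤ m) (hmn : m ≤ n)
    (h : n * a = m * b) : min ((n - 1) * a) ((m - 1) * b) = (n - 1) * a := by
  refine min_eq_left (le_of_mul_le_mul_left ?_ (by omega : 0 < m))
  nlinarith

namespace CurveFunctionField

variable {k : Type} [Field k] (F : CurveFunctionField k) (p : F.Point)

lemma ne_zero_of_v_ne_zero {f : F.K} (h : F.v p f ≠ 0) : f ≠ 0 := by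
  rintro rfl
  exact h (F.v_zero p)

lemma v_one : F.v p 1 = 0 := by
  simpa using F.v_const p 1 one_ne_zero

lemma v_neg (f : F.K) : F.v p (-f) = F.v p f := by
  rcases eq_or_ne f 0 with rfl | hf
  · simp
  have hneg : -f = algebraMap k F.K (-1) * f := by simp
  rw [hneg, F.v_mul p _ f (by simp) hf, F.v_const p (-1) (by norm_num), zero_add]

lemma v_pow {f : F.K} (hf : f ≠ 0) (n : ℕ) : F.v p (f ^ n) = n * F.v p f := by
  induction n with
  | zero => simpa using F.v_one p
  | succ n ih =>
    rw [pow_succ, F.v_mul p _ f (pow_ne_zero n hf) hf, ih]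
    push_cast
    ring

lemma v_add_eq_left_of_lt {f g : F.K} (hf : f ≠ 0) (h : F.v p f < F.v p g) :
    F.v p (f + g) = F.v p f := by
  rcases eq_or_ne g 0 with rfl | hg
  · rw [add_zero]
  have hfg : f + g ≠ 0 := by
    intro h0
    rw [eq_neg_of_add_eq_zero_left h0, v_neg] at h
    exact h.false
  have hle := F.v_add p f g hf hg hfg
  have hge := F.v_add p (f + g) (-g) hfg (neg_ne_zero.mpr hg) (by simpa using hf)
  rw [add_neg_cancel_right, v_neg] at hge
  omega

/-- The elements regular at `p`; the junk value `v p 0 = 0` puts `0` in it. -/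
def valuationSubalgebra : Subalgebra k F.K where
  carrier := {x | 0 ≤ F.v p x}
  zero_mem' := (F.v_zero p).ge
  add_mem' {x y} hx hy := by
    rcases eq_or_ne x 0 with rfl | hx0
    · simpa using hy
    rcases eq_or_ne y 0 with rfl | hy0
    · simpa using hx
    rcases eq_or_ne (x + y) 0 with hxy | hxy
    · exact hxy ▸ (F.v_zero p).ge
    exact le_trans (le_min hx hy) (F.v_add p x y hx0 hy0 hxy)
  mul_mem' {x y} hx hy := by
    rcases eq_or_ne x 0 with rfl | hx0
    · simpa using (F.v_zero p).ge
    rcases eq_or_ne y 0 with rfl | hy0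
    · simpa using (F.v_zero p).ge
    show 0 ≤ F.v p (x * y)
    rw [F.v_mul p x y hx0 hy0]
    exact add_nonneg hx hy
  algebraMap_mem' c := by
    rcases eq_or_ne c 0 with rfl | hc
    · simpa using (F.v_zero p).ge
    exact (F.v_const p c hc).ge

lemma v_aeval_nonneg {g : F.K} (hg : 0 ≤ F.v p g) (R : k[X]) : 0 ≤ F.v p (aeval g R) := by
  have hmem : g ∈ F.valuationSubalgebra p := hg
  have := (aeval (⟨g, hmem⟩ : F.valuationSubalgebra p) R).2
  rwa [coe_aeval_mk_apply] at this

lemma v_aeval_of_v_neg {f : F.K} (hp : F.v p f < 0) {R : k[X]} (hR : R ≠ 0) :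
    F.v p (aeval f R) = R.natDegree * F.v p f := by
  have hf : f ≠ 0 := F.ne_zero_of_v_ne_zero p hp.ne
  refine induction_with_natDegree_le
    (fun R => R ≠ 0 → F.v p (aeval f R) = R.natDegree * F.v p f) R.natDegree
    (fun h => absurd rfl h) ?_ ?_ R le_rfl hR
  · intro n r hr _ _
    rw [natDegree_C_mul_X_pow n r hr, map_mul, map_pow, aeval_C, aeval_X,
      F.v_mul p _ _ (by simpa using hr) (pow_ne_zero n hf), F.v_const p r hr, F.v_pow p hf,
      zero_add]
  · intro a b hab _ iha ihb _
    have hb : b ≠ 0 := ne_zero_of_natDegree_gt hab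
    have hvb : F.v p (aeval f b) = b.natDegree * F.v p f := ihb hb
    rw [natDegree_add_eq_right_of_natDegree_lt hab, map_add, add_comm,
      F.v_add_eq_left_of_lt p _ _, hvb]
    · apply F.ne_zero_of_v_ne_zero p
      rw [hvb]
      exact mul_ne_zero (by omega) hp.ne
    · rcases eq_or_ne a 0 with rfl | ha
      · simp only [map_zero, F.v_zero, hvb]
        exact mul_neg_of_pos_of_neg (by exact_mod_cast pos_of_gt hab) hp
      rw [hvb, iha ha]
      exact mul_lt_mul_of_neg_right (by exact_mod_cast hab) hp

lemma ht_eq_neg_finsum_mem_v_neg (f : F.K) :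
    F.ht f = -∑ᶠ p ∈ {p : F.Point | F.v p f < 0}, F.v p f := by
  rw [ht, finsum_neg_distrib, finsum_mem_def]
  congr 2
  ext p
  simp only [Set.indicator, Set.mem_ofPred_eq]
  split_ifs with hp
  · exact min_eq_right hp.le
  · exact min_eq_left (not_lt.mp hp)

end CurveFunctionField

theorem sum_min_deriv_at_poles_general {k : Type} [Field k] [CharZero k]
    (F : CurveFunctionField k) (P Q : Polynomial k)
    (hP : 0 < Q.natDegree) (hnm : Q.natDegree ≤ P.natDegree)
    (f g : F.K)
    (heq : Polynomial.aeval f P = Polynomial.aeval g Q) :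
    -∑ᶠ p ∈ {p : F.Point | F.v p f < 0},
        min (F.v p (Polynomial.aeval f P.derivative))
            (F.v p (Polynomial.aeval g Q.derivative)) =
      ((P.natDegree : ℤ) - 1) * F.ht f := by
  have hPdeg : 0 < P.natDegree := hP.trans_le hnm
  have pointwise (p : F.Point) (hp : F.v p f < 0) :
      min (F.v p (aeval f P.derivative)) (F.v p (aeval g Q.derivative)) =
        ((P.natDegree : ℤ) - 1) * F.v p f := by
    have hvP := F.v_aeval_of_v_neg p hp (ne_zero_of_natDegree_gt hPdeg)
    have hg : F.v p g < 0 := by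
      by_contra! hg
      have := F.v_aeval_nonneg p hg Q
      rw [← heq, hvP] at this
      nlinarith
    rw [F.v_aeval_of_v_neg p hp (by simpa using hPdeg.ne'),
      F.v_aeval_of_v_neg p hg (by simpa using hP.ne'), natDegree_derivative,
      natDegree_derivative, Nat.cast_sub hPdeg, Nat.cast_sub hP, Nat.cast_one]
    refine min_sub_one_mul_eq_left hp (by omega) (by exact_mod_cast hnm) ?_
    rw [← hvP, heq, F.v_aeval_of_v_neg p hg (ne_zero_of_natDegree_gt hP)]
  rw [finsum_mem_congr (t := {p | F.v p f < 0}) rfl pointwise, ht_eq_neg_finsum_mem_v_neg,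
    ← mul_finsum_mem]
  ring

/-- `−Σ_{v_p(f)<0} min{v_p(P'(f)), v_p(Q'(g))} = (n−1)·h(f)` when `P(f)=Q(g)`
and `n = deg P ≥ deg Q = m`. -/
theorem sum_min_deriv_at_poles {k : Type} [Field k] [IsAlgClosed k] [CharZero k]
    (F : CurveFunctionField k) (P Q : Polynomial k)
    (hP : 0 < Q.natDegree) (hnm : Q.natDegree ≤ P.natDegree)
    (f g : F.K) (hf : F.Nonconstant f) (hg : F.Nonconstant g)
    (heq : Polynomial.aeval f P = Polynomial.aeval g Q) :
    -∑ᶠ p ∈ {p : F.Point | F.v p f < 0},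
        min (F.v p (Polynomial.aeval f P.derivative))
            (F.v p (Polynomial.aeval g Q.derivative)) =
      ((P.natDegree : ℤ) - 1) * F.ht f :=
  sum_min_deriv_at_poles_general F P Q hP hnm f g heq
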